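/- Let n ≥ 1 and let u : ℝⁿ × (0,∞) → ℝ be such that y ↦ u(y,t) is differentiable for every t > 0. Define Nu(x) = sup{ |u(y,t)| : y ∈ ℝⁿ, t > 0, |x−y| < t }, u⁺(x) = sup_{t>0} |u(x,t)|, and Gu(x) = sup{ t ‖∇_y u(y,t)‖ : y ∈ ℝⁿ, t > 0, |x−y| < 2t }, where ∇_y denotes the gradient in the first variable. Assume Nu, u⁺, and Gu are Lebesgue measurable. Then there exists a constant A = A(n) > 0, depending only on n, such that for every r with 0 < r ≤ 1, ‖Nu‖_{L¹(ℝⁿ)} ≤ 2 A r^{-n} ‖u⁺‖_{L¹(ℝⁿ)} + r ‖Gu‖_{L¹(ℝⁿ)}. -/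

import Mathlib

open MeasureTheory Set
open scoped ENNReal

/-- The nontangential maximal function `Nu(x) = sup_{|x−y|<t} |u(y,t)|`. -/
noncomputable def ntMax {n : ℕ} (u : EuclideanSpace ℝ (Fin n) → ℝ → ℝ)
    (x : EuclideanSpace ℝ (Fin n)) : ℝ≥0∞ :=
  ⨆ (y : EuclideanSpace ℝ (Fin n)) (t : ℝ) (_ : 0 < t) (_ : dist x y < t),
    ENNReal.ofReal |u y t|

/-- The radial maximal function `u⁺(x) = sup_{t>0} |u(x,t)|`. -/
noncomputable def radMax {n : ℕ} (u : EuclideanSpace ℝ (Fin n) → ℝ → ℝ)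
    (x : EuclideanSpace ℝ (Fin n)) : ℝ≥0∞ :=
  ⨆ (t : ℝ) (_ : 0 < t), ENNReal.ofReal |u x t|

/-- The nontangential gradient maximal function
`Gu(x) = sup_{|x−y|<2t} t ‖∇_y u(y,t)‖`. -/
noncomputable def gradMax {n : ℕ} (u : EuclideanSpace ℝ (Fin n) → ℝ → ℝ)
    (x : EuclideanSpace ℝ (Fin n)) : ℝ≥0∞ :=
  ⨆ (y : EuclideanSpace ℝ (Fin n)) (t : ℝ) (_ : 0 < t) (_ : dist x y < 2 * t),
    ENNReal.ofReal (t * ‖gradient (fun z => u z t) y‖)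

/-!
A good-λ argument. If `Nu(x) > s` is witnessed by `(y, t)` and `Gu(x) ≤ s / r`, then the mean
value theorem keeps `|u(·, t)| > s / 2` on `B(y, r t / 2)`, so `u⁺ > s / 2` there. Vitali's covering
lemma turns this into `|{Nu > s, Gu ≤ s / r}| ≤ (8 / r)ⁿ |{u⁺ > s / 2}|`, and integrating in `s`
with the layer-cake formula gives the estimate with `A = 8ⁿ`.
-/

open Metric Module

theorem ENNReal.ofReal_div_lt_iff {a s : ℝ} (ha : 0 < a) {x : ℝ≥0∞} :
    ENNReal.ofReal (s / a) < x ↔ ENNReal.ofReal s < ENNReal.ofReal a * x := by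
  rw [ENNReal.ofReal_div_of_pos ha, ENNReal.div_lt_iff (Or.inl (ENNReal.ofReal_pos.2 ha).ne')
    (Or.inl ENNReal.ofReal_ne_top), mul_comm]

theorem volume_Ioi_restrict_setOf_ofReal_lt (a : ℝ≥0∞) :
    volume.restrict (Ioi 0) {s : ℝ | ENNReal.ofReal s < a} = a := by
  rw [Measure.restrict_apply' measurableSet_Ioi]
  induction a with
  | top => simp
  | coe a =>
    have : {s : ℝ | ENNReal.ofReal s < a} ∩ Ioi 0 = Ioo 0 (a : ℝ) := by
      ext s
      simp only [mem_inter_iff, mem_ofPred_eq, mem_Ioi, mem_Ioo]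
      exact ⟨fun ⟨hsa, hs⟩ => ⟨hs, (ENNReal.ofReal_lt_coe_iff hs.le).1 hsa⟩,
        fun ⟨hs, hsa⟩ => ⟨(ENNReal.ofReal_lt_coe_iff hs.le).2 hsa, hs⟩⟩
    simp [this]

theorem lintegral_eq_lintegral_meas_ofReal_lt {α : Type*} [MeasurableSpace α] (μ : Measure α)
    [SFinite μ] {f : α → ℝ≥0∞} (hf : Measurable f) :
    ∫⁻ x, f x ∂μ = ∫⁻ s in Ioi 0, μ {x | ENNReal.ofReal s < f x} := by
  have hE : MeasurableSet {p : α × ℝ | ENNReal.ofReal p.2 < f p.1} :=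
    measurableSet_lt (ENNReal.measurable_ofReal.comp measurable_snd) (hf.comp measurable_fst)
  calc ∫⁻ x, f x ∂μ = μ.prod (volume.restrict (Ioi 0)) {p | ENNReal.ofReal p.2 < f p.1} := by
        simp_rw [Measure.prod_apply hE, preimage_ofPred_eq, volume_Ioi_restrict_setOf_ofReal_lt]
    _ = _ := Measure.prod_apply_symm hE

theorem lintegral_le_of_meas_ofReal_lt_le {α : Type*} [MeasurableSpace α] {μ : Measure α}
    [SFinite μ] {f g h : α → ℝ≥0∞} (hf : Measurable f) (hg : Measurable g) (hh : Measurable h)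
    (c : ℝ≥0∞) (hfgh : ∀ s : ℝ, 0 < s → μ {x | ENNReal.ofReal s < f x} ≤
      c * μ {x | ENNReal.ofReal s < g x} + μ {x | ENNReal.ofReal s < h x}) :
    ∫⁻ x, f x ∂μ ≤ c * ∫⁻ x, g x ∂μ + ∫⁻ x, h x ∂μ := by
  have hmeas : ∀ k : α → ℝ≥0∞, Measurable fun s : ℝ => μ {x | ENNReal.ofReal s < k x} :=
    fun k => Antitone.measurable fun s s' hss' =>
      measure_mono fun x hx => (ENNReal.ofReal_le_ofReal hss').trans_lt hx
  simp only [lintegral_eq_lintegral_meas_ofReal_lt μ hf,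
    lintegral_eq_lintegral_meas_ofReal_lt μ hg, lintegral_eq_lintegral_meas_ofReal_lt μ hh]
  rw [← lintegral_const_mul c (hmeas g), ← lintegral_add_left ((hmeas g).const_mul c)]
  exact setLIntegral_mono (((hmeas g).const_mul c).add (hmeas h)) hfgh

section Covering

variable {E : Type*} [NormedAddCommGroup E] [NormedSpace ℝ E] [FiniteDimensional ℝ E]
  [MeasurableSpace E] [BorelSpace E] [Nontrivial E] (μ : Measure E) [μ.IsAddHaarMeasure]

theorem exists_radius_bound_of_ball_subset {T : Set E} (hT : μ T ≠ ⊤) :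
    ∃ R, ∀ y t, ball y t ⊆ T → t ≤ R := by
  refine ⟨max 1 (μ T / μ (ball 0 1)).toReal, fun y t hsub => ?_⟩
  rcases le_or_gt t 1 with ht | ht
  · exact le_max_of_le_left ht
  have hball := measure_mono (μ := μ) hsub
  rw [Measure.addHaar_ball_of_pos μ y (by linarith),
    ← ENNReal.le_div_iff_mul_le (Or.inl (measure_ball_pos μ 0 one_pos).ne')
      (Or.inl measure_ball_lt_top.ne)] at hball
  calc t ≤ t ^ finrank ℝ E := le_self_pow₀ ht.le finrank_pos.ne'
    _ ≤ (μ T / μ (ball 0 1)).toReal := (ENNReal.ofReal_le_iff_le_toReal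
        (ENNReal.div_ne_top hT (measure_ball_pos μ 0 one_pos).ne')).1 hball
    _ ≤ _ := le_max_right _ _

/-- Vitali's covering lemma: the selected balls `B(y, t)` are disjoint, their enlargements
`B(y, 4 t)` cover `S`, and `4 / ρ` is the ratio of these to the balls `B(y, ρ t) ⊆ T`. -/
theorem measure_le_of_forall_mem_ball_of_ball_subset {ρ : ℝ} (hρ0 : 0 < ρ) (hρ1 : ρ ≤ 1)
    {S T : Set E} (hcov : ∀ x ∈ S, ∃ y t, 0 < t ∧ dist x y < t ∧ ball y (ρ * t) ⊆ T) :
    μ S ≤ ENNReal.ofReal ((4 / ρ) ^ finrank ℝ E) * μ T := by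
  rcases eq_or_ne (μ T) ⊤ with hT | hT
  · rw [hT, ENNReal.mul_top (by positivity)]
    exact le_top
  obtain ⟨R, hR⟩ := exists_radius_bound_of_ball_subset μ hT
  choose y t ht hdist hsub using fun a : S => hcov a a.2
  obtain ⟨v, -, hvdisj, hvcov⟩ :=
    Vitali.exists_disjoint_subfamily_covering_enlargement_closedBall univ y t (R / ρ)
      (fun a _ => (le_div_iff₀' hρ0).2 (hR _ _ (hsub a))) 4 (by norm_num)
  have hv : v.Countable := hvdisj.countable_of_nonempty_interior fun a _ =>
    ⟨y a, ball_subset_interior_closedBall (mem_ball_self (ht a))⟩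
  have hvdisj' : v.PairwiseDisjoint fun a => ball (y a) (ρ * t a) := hvdisj.mono fun a =>
    ball_subset_closedBall.trans (closedBall_subset_closedBall (by nlinarith [ht a]))
  have hScov : S ⊆ ⋃ b ∈ v, closedBall (y b) ((4 / ρ) * (ρ * t b)) := fun x hx => by
    obtain ⟨b, hb, hab⟩ := hvcov ⟨x, hx⟩ (mem_univ _)
    refine mem_biUnion hb ?_
    rw [show 4 / ρ * (ρ * t b) = 4 * t b by field_simp]
    exact hab (mem_closedBall.2 (hdist ⟨x, hx⟩).le)
  calc μ S ≤ ∑' b : v, μ (closedBall (y b) ((4 / ρ) * (ρ * t b))) :=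
        (measure_mono hScov).trans (measure_biUnion_le μ hv _)
    _ = ∑' b : v, ENNReal.ofReal ((4 / ρ) ^ finrank ℝ E) * μ (ball (y b) (ρ * t b)) := by
        refine tsum_congr fun b => ?_
        rw [Measure.addHaar_closedBall_eq_addHaar_ball,
          Measure.addHaar_ball_mul μ _ (by positivity), Measure.addHaar_ball_center μ (y b)]
    _ = ENNReal.ofReal ((4 / ρ) ^ finrank ℝ E) * μ (⋃ b ∈ v, ball (y b) (ρ * t b)) := by
        rw [ENNReal.tsum_mul_left, measure_biUnion hv hvdisj' fun b _ => measurableSet_ball]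
    _ ≤ ENNReal.ofReal ((4 / ρ) ^ finrank ℝ E) * μ T := by
        gcongr
        exact iUnion₂_subset fun b _ => hsub b

end Covering

section MaximalFunctions

variable {n : ℕ} (u : EuclideanSpace ℝ (Fin n) → ℝ → ℝ)

theorem ofReal_abs_le_radMax {z : EuclideanSpace ℝ (Fin n)} {t : ℝ} (ht : 0 < t) :
    ENNReal.ofReal |u z t| ≤ radMax u z :=
  le_iSup₂_of_le t ht le_rfl

theorem ofReal_mul_norm_gradient_le_gradMax {x y : EuclideanSpace ℝ (Fin n)} {t : ℝ}
    (ht : 0 < t) (hxy : dist x y < 2 * t) :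
    ENNReal.ofReal (t * ‖gradient (fun z => u z t) y‖) ≤ gradMax u x :=
  le_iSup_of_le y (le_iSup₂_of_le t ht (le_iSup_of_le hxy le_rfl))

theorem exists_lt_abs_of_lt_ntMax {x : EuclideanSpace ℝ (Fin n)} {s : ℝ}
    (hs : ENNReal.ofReal s < ntMax u x) : ∃ y t, 0 < t ∧ dist x y < t ∧ s < |u y t| := by
  simp only [ntMax, lt_iSup_iff, ENNReal.ofReal_lt_ofReal_iff'] at hs
  obtain ⟨y, t, ht, hxy, hlt, -⟩ := hs
  exact ⟨y, t, ht, hxy, hlt⟩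

theorem exists_ball_subset_lt_radMax (hdiff : ∀ t : ℝ, 0 < t → Differentiable ℝ (fun y => u y t))
    {r s : ℝ} (hr0 : 0 < r) (hr2 : r ≤ 2) (hs : 0 < s) {x : EuclideanSpace ℝ (Fin n)}
    (hN : ENNReal.ofReal s < ntMax u x) (hG : gradMax u x ≤ ENNReal.ofReal (s / r)) :
    ∃ y t, 0 < t ∧ dist x y < t ∧
      ball y (r / 2 * t) ⊆ {z | ENNReal.ofReal (s / 2) < radMax u z} := by
  obtain ⟨y, t, ht, hxy, hus⟩ := exists_lt_abs_of_lt_ntMax u hN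
  refine ⟨y, t, ht, hxy, fun z hz => ?_⟩
  have hfderiv : ∀ w ∈ ball y (r / 2 * t), ‖fderiv ℝ (fun z => u z t) w‖ ≤ s / r / t := by
    intro w hw
    have hxw : dist x w < 2 * t := by
      nlinarith [dist_triangle x y w, mem_ball'.1 hw]
    have hgrad := (ofReal_mul_norm_gradient_le_gradMax u ht hxw).trans hG
    rw [ENNReal.ofReal_le_ofReal_iff (by positivity)] at hgrad
    rwa [← toDual_gradient, LinearIsometryEquiv.norm_map, le_div_iff₀ ht, mul_comm]
  have hmvt : |u z t - u y t| ≤ s / 2 :=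
    calc |u z t - u y t| ≤ s / r / t * ‖z - y‖ :=
          (convex_ball y _).norm_image_sub_le_of_norm_fderiv_le (fun w _ => (hdiff t ht) w)
            hfderiv (mem_ball_self (by positivity)) hz
      _ ≤ s / r / t * (r / 2 * t) := by
          gcongr
          exact (mem_ball_iff_norm.1 hz).le
      _ = s / 2 := by field_simp
  have hlt : s / 2 < |u z t| := by
    linarith [abs_sub_abs_le_abs_sub (u y t) (u z t), abs_sub_comm (u z t) (u y t)]
  exact ((ENNReal.ofReal_lt_ofReal_iff_of_nonneg (by positivity)).2 hlt).trans_le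
    (ofReal_abs_le_radMax u ht)

end MaximalFunctions

theorem volume_lt_ntMax_le {n : ℕ} [NeZero n] (u : EuclideanSpace ℝ (Fin n) → ℝ → ℝ)
    (hdiff : ∀ t : ℝ, 0 < t → Differentiable ℝ (fun y => u y t))
    {r s : ℝ} (hr0 : 0 < r) (hr1 : r ≤ 1) (hs : 0 < s) :
    volume {x | ENNReal.ofReal s < ntMax u x} ≤
      ENNReal.ofReal ((8 / r) ^ n) * volume {x | ENNReal.ofReal s < 2 * radMax u x} +
        volume {x | ENNReal.ofReal s < ENNReal.ofReal r * gradMax u x} := by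
  have hsplit : {x | ENNReal.ofReal s < ntMax u x} ⊆
      {x | ENNReal.ofReal s < ntMax u x ∧ gradMax u x ≤ ENNReal.ofReal (s / r)} ∪
        {x | ENNReal.ofReal s < ENNReal.ofReal r * gradMax u x} := fun x hx =>
    (le_or_gt (gradMax u x) _).imp (⟨hx, ·⟩) (ENNReal.ofReal_div_lt_iff hr0).1
  have hgood := measure_le_of_forall_mem_ball_of_ball_subset volume (ρ := r / 2)
    (S := {x | ENNReal.ofReal s < ntMax u x ∧ gradMax u x ≤ ENNReal.ofReal (s / r)})
    (by positivity) (by linarith) fun x hx =>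
      exists_ball_subset_lt_radMax u hdiff hr0 (by linarith) hs hx.1 hx.2
  have hhalf : {x | ENNReal.ofReal (s / 2) < radMax u x} =
      {x | ENNReal.ofReal s < 2 * radMax u x} := by
    simp only [ENNReal.ofReal_div_lt_iff two_pos, ENNReal.ofReal_ofNat]
  rw [finrank_euclideanSpace_fin, show 4 / (r / 2) = 8 / r by field_simp; norm_num,
    hhalf] at hgood
  calc _ ≤ _ := measure_mono hsplit
    _ ≤ _ := measure_union_le _ _
    _ ≤ _ := by gcongr

/-- Inequality (5.4) of the paper:
`‖Nu‖_{L¹} ≤ 2 A r^{-n} ‖u⁺‖_{L¹} + r ‖Gu‖_{L¹}` with `A = A(n)`. -/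
theorem stmt_15 (n : ℕ) (hn : 1 ≤ n) :
    ∃ A > (0:ℝ), ∀ (u : EuclideanSpace ℝ (Fin n) → ℝ → ℝ),
      (∀ t : ℝ, 0 < t → Differentiable ℝ (fun y => u y t)) →
      Measurable (ntMax u) → Measurable (radMax u) → Measurable (gradMax u) →
      ∀ r : ℝ, 0 < r → r ≤ 1 →
      (∫⁻ x, ntMax u x)
        ≤ ENNReal.ofReal (2 * A / r ^ n) * (∫⁻ x, radMax u x) +
            ENNReal.ofReal r * ∫⁻ x, gradMax u x := by
  have : NeZero n := ⟨by omega⟩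
  refine ⟨8 ^ n, by positivity, fun u hdiff hN hR hG r hr0 hr1 => ?_⟩
  calc ∫⁻ x, ntMax u x
      ≤ ENNReal.ofReal ((8 / r) ^ n) * (∫⁻ x, 2 * radMax u x) +
          ∫⁻ x, ENNReal.ofReal r * gradMax u x :=
        lintegral_le_of_meas_ofReal_lt_le hN (hR.const_mul 2) (hG.const_mul _) _
          fun s hs => volume_lt_ntMax_le u hdiff hr0 hr1 hs
    _ = ENNReal.ofReal (2 * 8 ^ n / r ^ n) * (∫⁻ x, radMax u x) +
          ENNReal.ofReal r * ∫⁻ x, gradMax u x := by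
        have hcoef : ENNReal.ofReal ((8 / r) ^ n) * 2 = ENNReal.ofReal (2 * 8 ^ n / r ^ n) := by
          rw [← ENNReal.ofReal_ofNat 2, ← ENNReal.ofReal_mul (by positivity), div_pow,
            mul_comm, mul_div_assoc]
        rw [lintegral_const_mul _ hR, lintegral_const_mul _ hG, ← mul_assoc, hcoef]
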